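/- arXiv:2302.08711 — 2 statements merged into one kernel-verified Lean document; each statement's English description precedes it below -/
import Mathlib

section
/- Let a ≤ b be integers, σ_x > 0, and σ_{h_a},…,σ_{h_b} > 0. Let H_k, H'_k, X_k, X'_k (k = a,…,b) be mutually independent real random variables with H_k, H'_k ~ N(0, σ_{h_k}²/2) and X_k, X'_k ~ N(0, σ_x²/2). Then the characteristic function of V = Σ_{k=a}^{b} (H_k·X_k − H'_k·X'_k) is E[exp(i t V)] = ∏_{k=a}^{b} (1 + σ_{h_k}²·σ_x²·t²/4)^{−1} for every real t. (Equation (36) of the paper.) -/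
/-!
Since the summands `H_k X_k - H'_k X'_k` are independent, the characteristic function of `V` is
the product of theirs, and each of those is the product of the characteristic functions of `H X`
and `-H' X'`. For independent `H ~ N(0, v)`, `X ~ N(0, w)`, integrating out `X` first gives
`E[exp(i t H X)] = E[exp(-w t² H² / 2)] = (1 + v w t²)^(-1/2)`, a Gaussian integral; two such
factors give `(1 + v w t²)⁻¹`, which is `(1 + σ_h² σ_x² t² / 4)⁻¹` for `v = σ_h²/2`, `w = σ_x²/2`.
-/

open MeasureTheory ProbabilityTheory Real
open scoped NNReal

lemma integral_exp_neg_mul_sq_gaussianReal (v : ℝ≥0) (r : ℝ) :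
    ∫ x, rexp (-(r * x ^ 2)) ∂gaussianReal 0 v = (√(1 + 2 * v * r))⁻¹ := by
  -- When `1 + 2 v r ≤ 0` both sides are junk zeros: the integrand is not integrable and `√` of a
  -- nonpositive number is `0`.
  rcases eq_or_ne v 0 with rfl | hv
  · simp [gaussianReal_zero_var]
  have hv' : (0 : ℝ) < v := by positivity
  have hpdf : ∀ x : ℝ, gaussianPDFReal 0 v x * rexp (-(r * x ^ 2))
      = (√(2 * π * v))⁻¹ * rexp (-((1 + 2 * v * r) / (2 * v)) * x ^ 2) := by
    intro x
    rw [gaussianPDFReal_def, mul_assoc, ← Real.exp_add]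
    congr 2
    field_simp
    ring
  simp_rw [integral_gaussianReal_eq_integral_smul hv, smul_eq_mul, hpdf, integral_const_mul,
    integral_gaussian]
  rw [div_div_eq_mul_div, Real.sqrt_div (by positivity), mul_div_assoc',
    show π * (2 * v) = 2 * π * v by ring, inv_mul_cancel₀ (by positivity), one_div]

open Complex in
lemma charFun_map_mul_gaussianReal_prod (v w : ℝ≥0) (t : ℝ) :
    charFun (((gaussianReal 0 v).prod (gaussianReal 0 w)).map (fun p ↦ p.1 * p.2)) t
      = ((√(1 + v * w * t ^ 2))⁻¹ : ℝ) := by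
  have hinner : ∀ x : ℝ, ∫ y, cexp (t * (x * y : ℝ) * I) ∂gaussianReal 0 w
      = (rexp (-(w * t ^ 2 / 2 * x ^ 2)) : ℝ) := by
    intro x
    have h := charFun_gaussianReal (μ := 0) (v := w) (t * x)
    rw [charFun_apply_real] at h
    convert h using 3 with y <;> push_cast <;> ring_nf
  have hint : Integrable (fun p : ℝ × ℝ ↦ cexp (t * (p.1 * p.2 : ℝ) * I))
      ((gaussianReal 0 v).prod (gaussianReal 0 w)) :=
    (integrable_const (1 : ℝ)).mono' (by fun_prop)
      (ae_of_all _ fun p ↦ by rw [← ofReal_mul, norm_exp_ofReal_mul_I])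
  rw [charFun_apply_real, integral_map (by fun_prop) (by fun_prop), integral_prod _ hint]
  simp_rw [hinner]
  rw [integral_complex_ofReal, integral_exp_neg_mul_sq_gaussianReal]
  congr 3
  ring

section

variable {Ω : Type*} {mΩ : MeasurableSpace Ω} {P : Measure Ω} [IsProbabilityMeasure P]

lemma iIndepFun.curry {ι κ 𝓧 : Type*} {m𝓧 : MeasurableSpace 𝓧} {X : ι → κ → Ω → 𝓧}
    (mX : ∀ i j, Measurable (X i j)) (h : iIndepFun (fun p : ι × κ ↦ X p.1 p.2) P) :
    iIndepFun (fun i ω j ↦ X i j ω) P := by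
  have : ∀ i j, IsProbabilityMeasure (P.map (X i j)) :=
    fun i j ↦ Measure.isProbabilityMeasure_map (mX i j).aemeasurable
  have hjoint := (iIndepFun_iff_map_fun_eq_infinitePi_map fun p : ι × κ ↦ mX p.1 p.2).1 h
  have hblock : ∀ i, P.map (fun ω j ↦ X i j ω) = Measure.infinitePi fun j ↦ P.map (X i j) :=
    fun i ↦ (iIndepFun_iff_map_fun_eq_infinitePi_map (mX i)).1
      (h.precomp (g := fun j ↦ (i, j)) (Prod.mk_right_injective i))
  rw [iIndepFun_iff_map_fun_eq_infinitePi_map fun i ↦ measurable_pi_lambda _ (mX i)]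
  simp_rw [hblock]
  rw [← Measure.infinitePi_map_curry (fun i j ↦ P.map (X i j)), ← hjoint,
    Measure.map_map (by fun_prop) (measurable_pi_lambda _ fun p : ι × κ ↦ mX p.1 p.2)]
  rfl

lemma IndepFun.charFun_map_mul_of_gaussianReal {H X : Ω → ℝ} {v w : ℝ≥0}
    (mH : Measurable H) (mX : Measurable X) (hHX : IndepFun H X P)
    (hH : P.map H = gaussianReal 0 v) (hX : P.map X = gaussianReal 0 w) (t : ℝ) :
    charFun (P.map (H * X)) t = ((√(1 + v * w * t ^ 2))⁻¹ : ℝ) := by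
  have hprod := (indepFun_iff_map_prod_eq_prod_map_map mH.aemeasurable mX.aemeasurable).1 hHX
  rw [hH, hX] at hprod
  rw [← charFun_map_mul_gaussianReal_prod, ← hprod, Measure.map_map (by fun_prop) (by fun_prop)]
  rfl

lemma iIndepFun.charFun_map_mul_sub_mul_of_gaussianReal {Y : Fin 4 → Ω → ℝ} {v w : ℝ≥0}
    (mY : ∀ j, Measurable (Y j)) (hY : iIndepFun Y P)
    (h0 : P.map (Y 0) = gaussianReal 0 v) (h1 : P.map (Y 1) = gaussianReal 0 v)
    (h2 : P.map (Y 2) = gaussianReal 0 w) (h3 : P.map (Y 3) = gaussianReal 0 w) (t : ℝ) :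
    charFun (P.map (Y 0 * Y 2 - Y 1 * Y 3)) t = ((1 + v * w * t ^ 2)⁻¹ : ℝ) := by
  have hsplit : Y 0 * Y 2 - Y 1 * Y 3 = Y 0 * Y 2 + fun ω ↦ -1 * (Y 1 * Y 3) ω := by
    ext ω; simp only [Pi.sub_apply, Pi.add_apply]; ring
  have hind : IndepFun (Y 0 * Y 2) (fun ω ↦ -1 * (Y 1 * Y 3) ω) P :=
    (hY.indepFun_mul_mul mY 0 2 1 3 (by decide) (by decide) (by decide) (by decide)).comp
      measurable_id (measurable_const_mul (-1))
  rw [hsplit, hind.charFun_map_add_eq_mul (by fun_prop) (by fun_prop), Pi.mul_apply,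
    charFun_map_mul_comp (by fun_prop),
    IndepFun.charFun_map_mul_of_gaussianReal (mY 0) (mY 2) (hY.indepFun (by decide)) h0 h2,
    IndepFun.charFun_map_mul_of_gaussianReal (mY 1) (mY 3) (hY.indepFun (by decide)) h1 h3,
    ← Complex.ofReal_mul, neg_one_mul, neg_sq, ← mul_inv, Real.mul_self_sqrt (by positivity)]

end

theorem charFun_sum_gaussian_products_general
    {Ω : Type*} [MeasureSpace Ω] [IsProbabilityMeasure (ℙ : Measure Ω)]
    (a b : ℤ)
    (σx : ℝ)
    (σh : ℤ → ℝ)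
    (H H' X X' : ℤ → Ω → ℝ)
    (hHm : ∀ k ∈ Finset.Icc a b, Measurable (H k))
    (hH'm : ∀ k ∈ Finset.Icc a b, Measurable (H' k))
    (hXm : ∀ k ∈ Finset.Icc a b, Measurable (X k))
    (hX'm : ∀ k ∈ Finset.Icc a b, Measurable (X' k))
    (hHlaw : ∀ k ∈ Finset.Icc a b,
      Measure.map (H k) ℙ = gaussianReal 0 (Real.toNNReal (σh k ^ 2 / 2)))
    (hH'law : ∀ k ∈ Finset.Icc a b,
      Measure.map (H' k) ℙ = gaussianReal 0 (Real.toNNReal (σh k ^ 2 / 2)))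
    (hXlaw : ∀ k ∈ Finset.Icc a b,
      Measure.map (X k) ℙ = gaussianReal 0 (Real.toNNReal (σx ^ 2 / 2)))
    (hX'law : ∀ k ∈ Finset.Icc a b,
      Measure.map (X' k) ℙ = gaussianReal 0 (Real.toNNReal (σx ^ 2 / 2)))
    -- mutual independence of all the variables H_k, H'_k, X_k, X'_k, k = a,…,b
    (hindep : iIndepFun
      (fun p : (Finset.Icc a b) × Fin 4 => ![H, H', X, X'] p.2 (p.1 : ℤ)) ℙ) :
    ∀ t : ℝ,
      ∫ ω, Complex.exp (Complex.I * (t : ℂ) *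
          ((∑ k ∈ Finset.Icc a b, (H k ω * X k ω - H' k ω * X' k ω) : ℝ) : ℂ)) ∂ℙ
        = ((∏ k ∈ Finset.Icc a b, (1 + σh k ^ 2 * σx ^ 2 * t ^ 2 / 4)⁻¹ : ℝ) : ℂ) := by
  intro t
  set F : ℤ → Ω → ℝ := fun k ↦ H k * X k - H' k * X' k
  have mZ : ∀ (k : Finset.Icc a b) (j : Fin 4), Measurable (![H, H', X, X'] j (k : ℤ)) := by
    intro k j
    fin_cases j
    exacts [hHm k k.2, hH'm k k.2, hXm k k.2, hX'm k k.2]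
  have hFindep : iIndepFun ((Finset.Icc a b).restrict F) ℙ :=
    (iIndepFun.curry mZ hindep).comp (fun _ (y : Fin 4 → ℝ) ↦ y 0 * y 2 - y 1 * y 3)
      fun _ ↦ by fun_prop
  have hFlaw : ∀ k ∈ Finset.Icc a b,
      charFun (Measure.map (F k) ℙ) t = ((1 + σh k ^ 2 * σx ^ 2 * t ^ 2 / 4)⁻¹ : ℝ) := by
    intro k hk
    refine (iIndepFun.charFun_map_mul_sub_mul_of_gaussianReal (mZ ⟨k, hk⟩)
      (hindep.precomp (Prod.mk_right_injective ⟨k, hk⟩)) (hHlaw k hk) (hH'law k hk) (hXlaw k hk)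
      (hX'law k hk) t).trans ?_
    rw [Real.coe_toNNReal _ (by positivity), Real.coe_toNNReal _ (by positivity)]
    ring_nf
  calc _ = charFun (Measure.map (fun ω ↦ ∑ k ∈ Finset.Icc a b, F k ω) ℙ) t := by
        rw [charFun_apply_real, integral_map (by fun_prop) (by fun_prop)]
        congr with ω
        simp only [F, Pi.sub_apply, Pi.mul_apply]
        ring_nf
    _ = ∏ k ∈ Finset.Icc a b, charFun (Measure.map (F k) ℙ) t := by
        rw [hFindep.charFun_map_fun_finsetSum_eq_prod fun k hk ↦ by fun_prop, Finset.prod_apply]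
    _ = _ := by rw [Finset.prod_congr rfl hFlaw, Complex.ofReal_prod]

/-- Equation (36) of the paper: the characteristic function of
`V = ∑_{k=a}^{b} (H_k·X_k − H'_k·X'_k)`, where all the `H_k, H'_k ~ N(0, σ_{h_k}²/2)` and
`X_k, X'_k ~ N(0, σ_x²/2)` are mutually independent, is
`E[exp(i t V)] = ∏_{k=a}^{b} (1 + σ_{h_k}²·σ_x²·t²/4)⁻¹`. -/
theorem charFun_sum_gaussian_products
    {Ω : Type*} [MeasureSpace Ω] [IsProbabilityMeasure (ℙ : Measure Ω)]
    (a b : ℤ) (hab : a ≤ b)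
    (σx : ℝ) (hσx : 0 < σx)
    (σh : ℤ → ℝ) (hσh : ∀ k ∈ Finset.Icc a b, 0 < σh k)
    (H H' X X' : ℤ → Ω → ℝ)
    (hHm : ∀ k ∈ Finset.Icc a b, Measurable (H k))
    (hH'm : ∀ k ∈ Finset.Icc a b, Measurable (H' k))
    (hXm : ∀ k ∈ Finset.Icc a b, Measurable (X k))
    (hX'm : ∀ k ∈ Finset.Icc a b, Measurable (X' k))
    (hHlaw : ∀ k ∈ Finset.Icc a b,
      Measure.map (H k) ℙ = gaussianReal 0 (Real.toNNReal (σh k ^ 2 / 2)))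
    (hH'law : ∀ k ∈ Finset.Icc a b,
      Measure.map (H' k) ℙ = gaussianReal 0 (Real.toNNReal (σh k ^ 2 / 2)))
    (hXlaw : ∀ k ∈ Finset.Icc a b,
      Measure.map (X k) ℙ = gaussianReal 0 (Real.toNNReal (σx ^ 2 / 2)))
    (hX'law : ∀ k ∈ Finset.Icc a b,
      Measure.map (X' k) ℙ = gaussianReal 0 (Real.toNNReal (σx ^ 2 / 2)))
    -- mutual independence of all the variables H_k, H'_k, X_k, X'_k, k = a,…,b
    (hindep : iIndepFun
      (fun p : (Finset.Icc a b) × Fin 4 => ![H, H', X, X'] p.2 (p.1 : ℤ)) ℙ) :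
    ∀ t : ℝ,
      ∫ ω, Complex.exp (Complex.I * (t : ℂ) *
          ((∑ k ∈ Finset.Icc a b, (H k ω * X k ω - H' k ω * X' k ω) : ℝ) : ℂ)) ∂ℙ
        = ((∏ k ∈ Finset.Icc a b, (1 + σh k ^ 2 * σx ^ 2 * t ^ 2 / 4)⁻¹ : ℝ) : ℂ) :=
  charFun_sum_gaussian_products_general a b σx σh H H' X X' hHm hH'm hXm hX'm hHlaw hH'law hXlaw
    hX'law hindep
end

section
/- Let a ≤ b be integers, λ_a,…,λ_b be pairwise distinct positive reals, and σ_w > 0. Let f_V(v) = (∏_{i=a}^{b} λ_i)² · Σ_{j=a}^{b} Σ_{n=a}^{b} [∏_{k≠j}(λ_k − λ_j)]^{−1} [∏_{p≠n}(λ_p − λ_n)]^{−1} · e^{−λ_j |v|}/(λ_j + λ_n). Then for every real y, the convolution of f_V with the centered Gaussian density of variance σ_w²/2 admits the closed form ∫_{−∞}^{∞} (πσ_w²)^{−1/2} e^{−(y−v)²/σ_w²} · f_V(v) dv = (∏_{i=a}^{b} λ_i)² · Σ_{j=a}^{b} Σ_{n=a}^{b} e^{(λ_j σ_w/2)²} ·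 [∏_{k≠j}(λ_k − λ_j)]^{−1} [∏_{u≠n}(λ_u − λ_n)]^{−1} (λ_j + λ_n)^{−1} · (1/2)·[ e^{−λ_j y}(1 − Φ(λ_j σ_w/2 − y/σ_w)) + e^{λ_j y}(1 − Φ(λ_j σ_w/2 + y/σ_w)) ], where Φ is the Gaussian error function. (Equation (20) of the paper, the heart of Theorem 2.) -/
open MeasureTheory Real

/-- The Gaussian error function `Φ(x) = (2/√π)·∫₀^x e^{−t²} dt` (odd, defined for all real
`x` via the oriented interval integral). -/
noncomputable def errFun (x : ℝ) : ℝ :=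
  (2 / Real.sqrt π) * ∫ t in (0 : ℝ)..x, Real.exp (-t ^ 2)

section Aux

open Set

lemma tailGauss (c : ℝ) :
    ∫ t in Set.Ioi c, Real.exp (-t ^ 2)
      = Real.sqrt π / 2 - ∫ t in (0 : ℝ)..c, Real.exp (-t ^ 2) := by
  have hInt : Integrable (fun t : ℝ => Real.exp (-t ^ 2)) := by
    simpa using integrable_exp_neg_mul_sq (one_pos)
  have h3 : ∫ t : ℝ, Real.exp (-t ^ 2) = Real.sqrt π := by
    simpa using integral_gaussian 1
  have h4 : ∫ t in Set.Ioi (0 : ℝ), Real.exp (-t ^ 2) = Real.sqrt π / 2 := by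
    simpa using integral_gaussian_Ioi 1
  have h1 : (∫ t in Set.Iic c, Real.exp (-t ^ 2)) + ∫ t in Set.Ioi c, Real.exp (-t ^ 2)
      = Real.sqrt π := by
    rw [← h3]; exact intervalIntegral.integral_Iic_add_Ioi hInt.integrableOn hInt.integrableOn
  have h0 : (∫ t in Set.Iic (0 : ℝ), Real.exp (-t ^ 2)) + Real.sqrt π / 2 = Real.sqrt π := by
    rw [← h4, ← h3]; exact intervalIntegral.integral_Iic_add_Ioi hInt.integrableOn hInt.integrableOn
  have h2 : (∫ t in Set.Iic c, Real.exp (-t ^ 2))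
      - ∫ t in Set.Iic (0 : ℝ), Real.exp (-t ^ 2) = ∫ t in (0 : ℝ)..c, Real.exp (-t ^ 2) :=
    intervalIntegral.integral_Iic_sub_Iic hInt.integrableOn hInt.integrableOn
  linarith

lemma shiftIoi (f : ℝ → ℝ) (c d : ℝ) :
    ∫ x in Set.Ioi c, f (x + d) = ∫ x in Set.Ioi (c + d), f x := by
  have A : MeasurableEmbedding fun x : ℝ => x + d :=
    (Homeomorph.addRight d).measurableEmbedding
  have h := A.setIntegral_map (μ := volume) f (Set.Ioi (c + d))
  rw [map_add_right_eq_self volume d, preimage_add_const_Ioi] at h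
  simpa [add_sub_cancel_right] using h.symm

/-- Half-line integral of a shifted Gaussian times an exponential. -/
lemma halfGauss (l σ y : ℝ) (hσ : 0 < σ) :
    ∫ v in Set.Ioi (0 : ℝ), Real.exp (-(y - v) ^ 2 / σ ^ 2) * Real.exp (-l * v)
      = Real.exp ((l * σ / 2) ^ 2) * Real.exp (-l * y) *
          (σ * (Real.sqrt π / 2 - ∫ t in (0 : ℝ)..(l * σ / 2 - y / σ), Real.exp (-t ^ 2))) := by
  have hσ' : σ ≠ 0 := hσ.ne'
  set m : ℝ := y - l * σ ^ 2 / 2 with hm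
  have key : ∀ v : ℝ, Real.exp (-(y - v) ^ 2 / σ ^ 2) * Real.exp (-l * v)
      = Real.exp ((l * σ / 2) ^ 2) * Real.exp (-l * y) * Real.exp (-((v + -m) * σ⁻¹) ^ 2) := by
    intro v
    rw [← Real.exp_add, ← Real.exp_add, ← Real.exp_add]
    congr 1
    field_simp
    ring
  rw [setIntegral_congr_fun measurableSet_Ioi (fun v _ => key v)]
  rw [integral_const_mul]
  congr 1
  have h1 : ∫ v in Set.Ioi (0 : ℝ), Real.exp (-((v + -m) * σ⁻¹) ^ 2)
      = ∫ x in Set.Ioi (-m), Real.exp (-(x * σ⁻¹) ^ 2) := by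
    simpa using shiftIoi (fun x => Real.exp (-(x * σ⁻¹) ^ 2)) 0 (-m)
  have h2 : ∫ x in Set.Ioi (-m), Real.exp (-(x * σ⁻¹) ^ 2)
      = σ * ∫ s in Set.Ioi ((-m) * σ⁻¹), Real.exp (-s ^ 2) := by
    have := integral_comp_mul_right_Ioi (fun s => Real.exp (-s ^ 2)) (-m) (inv_pos.mpr hσ)
    rw [this]
    simp [smul_eq_mul, inv_inv]
  have h3 : (-m) * σ⁻¹ = l * σ / 2 - y / σ := by
    rw [hm]; field_simp; ring
  rw [h1, h2, h3, tailGauss]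

lemma gauss_decay_integrable (σ y : ℝ) (hσ : 0 < σ) (l : ℝ) (hl : 0 ≤ l) :
    Integrable (fun v : ℝ => Real.exp (-(y - v) ^ 2 / σ ^ 2) * Real.exp (-l * |v|)) := by
  have hb : (0 : ℝ) < (σ ^ 2)⁻¹ := by positivity
  have hg : Integrable (fun v : ℝ => Real.exp (-(σ ^ 2)⁻¹ * v ^ 2)) :=
    integrable_exp_neg_mul_sq hb
  have hg' : Integrable (fun v : ℝ => Real.exp (-(σ ^ 2)⁻¹ * (v + -y) ^ 2)) :=
    hg.comp_add_right (-y)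
  refine hg'.mono ?_ ?_
  · apply Continuous.aestronglyMeasurable
    continuity
  · filter_upwards with v
    rw [Real.norm_eq_abs, Real.norm_eq_abs, abs_of_pos (by positivity),
      abs_of_pos (Real.exp_pos _)]
    have e1 : -(y - v) ^ 2 / σ ^ 2 = -(σ ^ 2)⁻¹ * (v + -y) ^ 2 := by
      field_simp; ring
    rw [e1]
    calc Real.exp (-(σ ^ 2)⁻¹ * (v + -y) ^ 2) * Real.exp (-l * |v|)
        ≤ Real.exp (-(σ ^ 2)⁻¹ * (v + -y) ^ 2) * 1 := by
          apply mul_le_mul_of_nonneg_left _ (Real.exp_pos _).le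
          rw [← Real.exp_zero]
          apply Real.exp_le_exp.mpr
          have : 0 ≤ l * |v| := mul_nonneg hl (abs_nonneg v)
          linarith
      _ = Real.exp (-(σ ^ 2)⁻¹ * (v + -y) ^ 2) := mul_one _

/-- The key single-λ convolution identity. -/
lemma key_single (l σ y : ℝ) (hl : 0 ≤ l) (hσ : 0 < σ) :
    ∫ v : ℝ, (Real.sqrt π * σ)⁻¹ *
        (Real.exp (-(y - v) ^ 2 / σ ^ 2) * Real.exp (-l * |v|))
      = Real.exp ((l * σ / 2) ^ 2) * ((1 / 2) *
          (Real.exp (-l * y) * (1 - errFun (l * σ / 2 - y / σ)) +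
           Real.exp (l * y) * (1 - errFun (l * σ / 2 + y / σ)))) := by
  have hσ' : σ ≠ 0 := hσ.ne'
  have hπ : Real.sqrt π ≠ 0 := by positivity
  have hG := gauss_decay_integrable σ y hσ l hl
  rw [integral_const_mul]
  have hsplit : (∫ v : ℝ, Real.exp (-(y - v) ^ 2 / σ ^ 2) * Real.exp (-l * |v|))
      = (∫ v in Set.Iic (0 : ℝ), Real.exp (-(y - v) ^ 2 / σ ^ 2) * Real.exp (-l * |v|))
        + ∫ v in Set.Ioi (0 : ℝ), Real.exp (-(y - v) ^ 2 / σ ^ 2) * Real.exp (-l * |v|) :=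
    (intervalIntegral.integral_Iic_add_Ioi hG.integrableOn hG.integrableOn).symm
  have hIoi : (∫ v in Set.Ioi (0 : ℝ), Real.exp (-(y - v) ^ 2 / σ ^ 2) * Real.exp (-l * |v|))
      = Real.exp ((l * σ / 2) ^ 2) * Real.exp (-l * y) *
          (σ * (Real.sqrt π / 2 - ∫ t in (0 : ℝ)..(l * σ / 2 - y / σ), Real.exp (-t ^ 2))) := by
    rw [setIntegral_congr_fun measurableSet_Ioi
      (g := fun v => Real.exp (-(y - v) ^ 2 / σ ^ 2) * Real.exp (-l * v))
      (fun v hv => by rw [abs_of_pos hv]), halfGauss l σ y hσ]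
  have hIic : (∫ v in Set.Iic (0 : ℝ), Real.exp (-(y - v) ^ 2 / σ ^ 2) * Real.exp (-l * |v|))
      = Real.exp ((l * σ / 2) ^ 2) * Real.exp (l * y) *
          (σ * (Real.sqrt π / 2 - ∫ t in (0 : ℝ)..(l * σ / 2 + y / σ), Real.exp (-t ^ 2))) := by
    have hneg : (∫ v in Set.Iic (0 : ℝ), Real.exp (-(y - v) ^ 2 / σ ^ 2) * Real.exp (-l * |v|))
        = ∫ x in Set.Ioi (0 : ℝ),
            Real.exp (-(y - -x) ^ 2 / σ ^ 2) * Real.exp (-l * |(-x)|) := by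
      have := integral_comp_neg_Ioi (0 : ℝ)
        (fun v => Real.exp (-(y - v) ^ 2 / σ ^ 2) * Real.exp (-l * |v|))
      rw [neg_zero] at this
      exact this.symm
    rw [hneg]
    have : ∀ x ∈ Set.Ioi (0 : ℝ),
        Real.exp (-(y - -x) ^ 2 / σ ^ 2) * Real.exp (-l * |(-x)|)
          = Real.exp (-(-y - x) ^ 2 / σ ^ 2) * Real.exp (-l * x) := by
      intro x hx
      rw [abs_neg, abs_of_pos hx]
      congr 2
      ring
    rw [setIntegral_congr_fun measurableSet_Ioi this, halfGauss l σ (-y) hσ]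
    have e1 : l * σ / 2 - -y / σ = l * σ / 2 + y / σ := by ring
    have e2 : -l * -y = l * y := by ring
    rw [e1, e2]
  rw [hsplit, hIoi, hIic]
  unfold errFun
  field_simp
  ring

end Aux

/-- Equation (20) of the paper (the heart of Theorem 2): the convolution of the
two-sided hypoexponential density
`f_V(v) = (∏_i λ_i)²·∑_j ∑_n [∏_{k≠j}(λ_k−λ_j)]⁻¹[∏_{p≠n}(λ_p−λ_n)]⁻¹·e^{−λ_j|v|}/(λ_j+λ_n)`
with the centered Gaussian density of variance `σ_w²/2` admits the stated closed form in
terms of the Gaussian error function. -/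
theorem convolution_hypoexponential_gaussian_closed_form
    (a b : ℤ) (hab : a ≤ b)
    (lam : ℤ → ℝ) (hlam : ∀ k ∈ Finset.Icc a b, 0 < lam k)
    (hdistinct : ∀ k ∈ Finset.Icc a b, ∀ k' ∈ Finset.Icc a b, k ≠ k' → lam k ≠ lam k')
    (σw : ℝ) (hσw : 0 < σw)
    (fV : ℝ → ℝ)
    (hfV : ∀ v, fV v =
      (∏ i ∈ Finset.Icc a b, lam i) ^ 2 *
        ∑ j ∈ Finset.Icc a b, ∑ n ∈ Finset.Icc a b,
          (∏ k ∈ (Finset.Icc a b).erase j, (lam k - lam j))⁻¹ *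
          (∏ p ∈ (Finset.Icc a b).erase n, (lam p - lam n))⁻¹ *
          (Real.exp (-lam j * |v|) / (lam j + lam n))) :
    ∀ y : ℝ,
      ∫ v : ℝ, (π * σw ^ 2) ^ (-(1 / 2) : ℝ) * Real.exp (-(y - v) ^ 2 / σw ^ 2) * fV v
        = (∏ i ∈ Finset.Icc a b, lam i) ^ 2 *
            ∑ j ∈ Finset.Icc a b, ∑ n ∈ Finset.Icc a b,
              Real.exp ((lam j * σw / 2) ^ 2) *
              (∏ k ∈ (Finset.Icc a b).erase j, (lam k - lam j))⁻¹ *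
              (∏ u ∈ (Finset.Icc a b).erase n, (lam u - lam n))⁻¹ *
              (lam j + lam n)⁻¹ *
              ((1 / 2) *
                (Real.exp (-lam j * y) * (1 - errFun (lam j * σw / 2 - y / σw)) +
                 Real.exp (lam j * y) * (1 - errFun (lam j * σw / 2 + y / σw)))) := by
  intro y
  set s := Finset.Icc a b with hs
  set P : ℝ := (∏ i ∈ s, lam i) ^ 2 with hP
  set c : ℤ → ℝ := fun j => (∏ k ∈ s.erase j, (lam k - lam j))⁻¹ with hc
  -- the normalization constant
  have hnorm : (π * σw ^ 2) ^ (-(1 / 2) : ℝ) = (Real.sqrt π * σw)⁻¹ := by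
    rw [Real.rpow_neg (by positivity), ← Real.sqrt_eq_rpow, Real.sqrt_mul Real.pi_pos.le,
      Real.sqrt_sq hσw.le]
  set G : ℤ → ℝ → ℝ := fun j v =>
    (Real.sqrt π * σw)⁻¹ * (Real.exp (-(y - v) ^ 2 / σw ^ 2) * Real.exp (-lam j * |v|))
    with hGdef
  set coef : ℤ → ℝ := fun j => P * c j * ∑ n ∈ s, c n * (lam j + lam n)⁻¹ with hcoef
  have hpt : ∀ v : ℝ, (π * σw ^ 2) ^ (-(1 / 2) : ℝ) * Real.exp (-(y - v) ^ 2 / σw ^ 2) * fV v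
      = ∑ j ∈ s, coef j * G j v := by
    intro v
    rw [hfV v, hnorm]
    simp only [hcoef, hGdef, Finset.mul_sum, Finset.sum_mul]
    refine Finset.sum_congr rfl fun j hj => ?_
    refine Finset.sum_congr rfl fun n hn => ?_
    simp only [div_eq_mul_inv]
    ring
  have hGint : ∀ j ∈ s, Integrable (G j) := by
    intro j hj
    exact ((gauss_decay_integrable σw y hσw (lam j) (hlam j hj).le).const_mul _)
  have hsum : (∫ v : ℝ, ∑ j ∈ s, coef j * G j v) = ∑ j ∈ s, coef j * ∫ v, G j v := by
    rw [integral_finset_sum s (fun j hj => (hGint j hj).const_mul _)]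
    exact Finset.sum_congr rfl fun j hj => integral_const_mul _ _
  have hGval : ∀ j ∈ s, (∫ v, G j v)
      = Real.exp ((lam j * σw / 2) ^ 2) * ((1 / 2) *
          (Real.exp (-lam j * y) * (1 - errFun (lam j * σw / 2 - y / σw)) +
           Real.exp (lam j * y) * (1 - errFun (lam j * σw / 2 + y / σw)))) :=
    fun j hj => key_single (lam j) σw y (hlam j hj).le hσw
  calc ∫ v : ℝ, (π * σw ^ 2) ^ (-(1 / 2) : ℝ) * Real.exp (-(y - v) ^ 2 / σw ^ 2) * fV v
      = ∫ v : ℝ, ∑ j ∈ s, coef j * G j v := by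
        exact integral_congr_ae (Filter.Eventually.of_forall hpt)
    _ = ∑ j ∈ s, coef j * ∫ v, G j v := hsum
    _ = P * ∑ j ∈ s, ∑ n ∈ s,
          Real.exp ((lam j * σw / 2) ^ 2) * c j * c n * (lam j + lam n)⁻¹ *
          ((1 / 2) *
            (Real.exp (-lam j * y) * (1 - errFun (lam j * σw / 2 - y / σw)) +
             Real.exp (lam j * y) * (1 - errFun (lam j * σw / 2 + y / σw)))) := by
        rw [Finset.mul_sum]
        refine Finset.sum_congr rfl fun j hj => ?_
        rw [hGval j hj, hcoef]
        simp only [Finset.mul_sum, Finset.sum_mul]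
        refine Finset.sum_congr rfl fun n hn => ?_
        ring
end
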